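/- arXiv:2210.11480 — 4 statements merged into one kernel-verified Lean document; each statement's English description precedes it below -/
import Mathlib

section
/- With the same setup, for all t ≥ 0 the renewal function satisfies e^{-ρ}(1 + λt) ≤ R(t) ≤ 1 + λt. -/
open MeasureTheory Real

theorem mginf_renewal_bounds'
    (lam : ℝ) (hlam : 0 < lam)
    (G : ℝ → ℝ) (hmono : Monotone G) (hG0 : ∀ v, 0 ≤ G v) (hG1 : ∀ v, G v ≤ 1)
    (hlim : Filter.Tendsto G Filter.atTop (nhds 1))
    (hint : IntegrableOn (fun v => 1 - G v) (Set.Ioi 0))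
    (p00 : ℝ → ℝ)
    (hp00 : ∀ t, p00 t = Real.exp (-(lam * ∫ v in (0:ℝ)..t, (1 - G v))))
    (R : ℝ → ℝ)
    (hR : ∀ t, R t = p00 t + lam * ∫ u in (0:ℝ)..t, p00 u)
    (ρ : ℝ) (hρ : ρ = lam * ∫ v in Set.Ioi (0:ℝ), (1 - G v)) :
    ∀ t, 0 ≤ t →
      Real.exp (-ρ) * (1 + lam * t) ≤ R t ∧ R t ≤ 1 + lam * t := by
  have hmeas : Measurable fun v => 1 - G v :=
    (measurable_const.sub hmono.measurable)
  have hIvInt : ∀ a b : ℝ, IntervalIntegrable (fun v => 1 - G v) volume a b := by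
    intro a b
    apply IntervalIntegrable.mono_fun'
      (g := fun _ => (1:ℝ)) (intervalIntegrable_const)
    · exact hmeas.aestronglyMeasurable
    · filter_upwards with x
      rw [Real.norm_eq_abs, abs_of_nonneg (by linarith [hG1 x])]
      linarith [hG0 x]
  -- bounds for F t := ∫ 0..t (1-G)
  have hFnn : ∀ t : ℝ, 0 ≤ t → 0 ≤ ∫ v in (0:ℝ)..t, (1 - G v) := by
    intro t ht
    apply intervalIntegral.integral_nonneg ht
    intro u _; linarith [hG1 u]
  have hFle : ∀ t : ℝ, 0 ≤ t →
      (∫ v in (0:ℝ)..t, (1 - G v)) ≤ ∫ v in Set.Ioi (0:ℝ), (1 - G v) := by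
    intro t ht
    rw [intervalIntegral.integral_of_le ht]
    apply setIntegral_mono_set hint
    · filter_upwards with x; simp only [Pi.zero_apply]; linarith [hG1 x]
    · filter_upwards with x hx
      exact hx.1
  have hρnn : 0 ≤ ρ := by
    rw [hρ]
    apply mul_nonneg hlam.le
    apply setIntegral_nonneg measurableSet_Ioi
    intro x _; linarith [hG1 x]
  -- bounds for p00
  have hp00le : ∀ t : ℝ, 0 ≤ t → p00 t ≤ 1 := by
    intro t ht
    rw [hp00 t]
    rw [Real.exp_le_one_iff]
    have := hFnn t ht
    nlinarith
  have hp00ge : ∀ t : ℝ, 0 ≤ t → Real.exp (-ρ) ≤ p00 t := by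
    intro t ht
    rw [hp00 t]
    apply Real.exp_le_exp.2
    rw [hρ]
    have := hFle t ht
    nlinarith
  -- continuity of p00
  have hFcont : Continuous fun t => ∫ v in (0:ℝ)..t, (1 - G v) :=
    intervalIntegral.continuous_primitive (fun a b => hIvInt a b) 0
  have hp00cont : Continuous p00 := by
    have : Continuous fun t => Real.exp (-(lam * ∫ v in (0:ℝ)..t, (1 - G v))) :=
      (Real.continuous_exp.comp ((continuous_const.mul hFcont).neg))
    convert this using 1
    ext t; exact hp00 t
  have hp00int : ∀ t : ℝ, IntervalIntegrable p00 volume 0 t :=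
    fun t => hp00cont.intervalIntegrable 0 t
  intro t ht
  have hIle : (∫ u in (0:ℝ)..t, p00 u) ≤ t := by
    calc (∫ u in (0:ℝ)..t, p00 u) ≤ ∫ _u in (0:ℝ)..t, (1:ℝ) := by
          apply intervalIntegral.integral_mono_on ht (hp00int t) intervalIntegrable_const
          intro u hu; exact hp00le u hu.1
      _ = t := by simp
  have hIge : Real.exp (-ρ) * t ≤ ∫ u in (0:ℝ)..t, p00 u := by
    calc Real.exp (-ρ) * t = ∫ _u in (0:ℝ)..t, Real.exp (-ρ) := by
          simp [mul_comm]
      _ ≤ ∫ u in (0:ℝ)..t, p00 u := by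
          apply intervalIntegral.integral_mono_on ht intervalIntegrable_const (hp00int t)
          intro u hu; exact hp00ge u hu.1
  constructor
  · rw [hR t]
    have h1 := hp00ge t ht
    nlinarith [Real.exp_pos (-ρ)]
  · rw [hR t]
    have h1 := hp00le t ht
    nlinarith
end

section
/- If the service distribution G (with mean α) is NBUE, i.e., ∫ₜ^∞(1-G(v))dv ≤ ∫ₜ^∞ e^{-v/α}dv = α e^{-t/α} for all t ≥ 0, then the busy cycle renewal function satisfies R^{NBUE}(t) ≤ R^M(t) for all t ≥ 0, where R^M is the renewal function for exponential service with the same mean α. -/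
open MeasureTheory Real

theorem mginf_renewal_NBUE
    (lam α : ℝ) (hlam : 0 < lam) (hα : 0 < α)
    (G : ℝ → ℝ) (hmono : Monotone G) (hG0 : ∀ v, 0 ≤ G v) (hG1 : ∀ v, G v ≤ 1)
    (hint : IntegrableOn (fun v => 1 - G v) (Set.Ioi 0))
    (hmean : (∫ v in Set.Ioi (0:ℝ), (1 - G v)) = α)
    (hNBUE : ∀ t ≥ (0:ℝ), (∫ v in Set.Ioi t, (1 - G v)) ≤ α * Real.exp (-(t / α)))
    (p00 : ℝ → ℝ)
    (hp00 : ∀ t, p00 t = Real.exp (-(lam * ∫ v in (0:ℝ)..t, (1 - G v))))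
    (R : ℝ → ℝ)
    (hR : ∀ t, R t = p00 t + lam * ∫ u in (0:ℝ)..t, p00 u)
    (ρ : ℝ) (hρ : ρ = lam * α)
    (RM : ℝ → ℝ)
    (hRM : ∀ t, RM t = Real.exp (-(ρ * (1 - Real.exp (-(t / α))))) +
      lam * Real.exp (-ρ) * ∫ u in (0:ℝ)..t, Real.exp (ρ * Real.exp (-(u / α)))) :
    ∀ t, 0 ≤ t → R t ≤ RM t := by
  -- 1 - G is antitone hence interval integrable everywhere
  have hanti : Antitone (fun v => 1 - G v) := fun a b hab => by
    simp only [sub_le_sub_iff_left]; exact hmono hab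
  have hGint : ∀ a b : ℝ, IntervalIntegrable (fun v => 1 - G v) volume a b := by
    intro a b
    exact (hanti.antitoneOn _).intervalIntegrable
  -- the primitive F
  set F : ℝ → ℝ := fun t => ∫ v in (0:ℝ)..t, (1 - G v) with hF
  have hFcont : Continuous F := intervalIntegral.continuous_primitive hGint 0
  -- key lower bound on F for t ≥ 0
  have hFbound : ∀ t : ℝ, 0 ≤ t → α * (1 - Real.exp (-(t / α))) ≤ F t := by
    intro t ht
    have hsplit : (∫ v in Set.Ioi (0:ℝ), (1 - G v)) =
        (∫ v in Set.Ioc (0:ℝ) t, (1 - G v)) + (∫ v in Set.Ioi t, (1 - G v)) := by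
      rw [← MeasureTheory.setIntegral_union]
      · rw [Set.Ioc_union_Ioi_eq_Ioi ht]
      · exact Set.Ioc_disjoint_Ioi le_rfl
      · exact measurableSet_Ioi
      · exact hint.mono_set (Set.Ioc_subset_Ioi_self.trans (by simp))
      · exact hint.mono_set (Set.Ioi_subset_Ioi ht)
    have hFeq : F t = (∫ v in Set.Ioc (0:ℝ) t, (1 - G v)) :=
      intervalIntegral.integral_of_le ht
    have h1 := hNBUE t ht
    have : F t = α - (∫ v in Set.Ioi t, (1 - G v)) := by
      rw [hFeq]; linarith [hsplit, hmean]
    rw [this]; nlinarith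
  -- pointwise bound on p00
  have hp00bound : ∀ u : ℝ, 0 ≤ u →
      p00 u ≤ Real.exp (-ρ) * Real.exp (ρ * Real.exp (-(u / α))) := by
    intro u hu
    rw [hp00 u, ← Real.exp_add]
    apply Real.exp_le_exp.mpr
    have := hFbound u hu
    have hmul : lam * (α * (1 - Real.exp (-(u / α)))) ≤ lam * F u :=
      mul_le_mul_of_nonneg_left this hlam.le
    rw [hρ]
    nlinarith
  -- continuity of p00 and the RHS integrand
  have hp00cont : Continuous p00 := by
    have : Continuous fun t => Real.exp (-(lam * F t)) :=
      Real.continuous_exp.comp ((continuous_const.mul hFcont).neg)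
    convert this using 1
    funext t; exact hp00 t
  have hRHScont : Continuous fun u : ℝ =>
      Real.exp (-ρ) * Real.exp (ρ * Real.exp (-(u / α))) :=
    continuous_const.mul (Real.continuous_exp.comp (continuous_const.mul
      (Real.continuous_exp.comp ((continuous_id.div_const α).neg))))
  intro t ht
  rw [hR t, hRM t]
  have hterm1 : p00 t ≤ Real.exp (-(ρ * (1 - Real.exp (-(t / α))))) := by
    have := hp00bound t ht
    rw [← Real.exp_add] at this
    convert this using 2
    ring
  have hterm2 : (∫ u in (0:ℝ)..t, p00 u) ≤
      ∫ u in (0:ℝ)..t, Real.exp (-ρ) * Real.exp (ρ * Real.exp (-(u / α))) := by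
    apply intervalIntegral.integral_mono_on ht
    · exact hp00cont.intervalIntegrable 0 t
    · exact hRHScont.intervalIntegrable 0 t
    · intro u hu
      exact hp00bound u hu.1
  have : lam * (∫ u in (0:ℝ)..t, p00 u) ≤
      lam * ∫ u in (0:ℝ)..t, Real.exp (-ρ) * Real.exp (ρ * Real.exp (-(u / α))) :=
    mul_le_mul_of_nonneg_left hterm2 hlam.le
  rw [intervalIntegral.integral_const_mul] at this
  linarith
end

section
/- If the service distribution G (with mean α) is NWUE, i.e., ∫ₜ^∞(1-G(v))dv ≥ α e^{-t/α} for all t ≥ 0, then R^{NWUE}(t) ≥ R^M(t) for all t ≥ 0, where R^M is the renewal function for exponential service with the same mean α. -/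
open MeasureTheory Real

theorem mginf_renewal_NWUE
    (lam α : ℝ) (hlam : 0 < lam) (hα : 0 < α)
    (G : ℝ → ℝ) (hmono : Monotone G) (hG0 : ∀ v, 0 ≤ G v) (hG1 : ∀ v, G v ≤ 1)
    (hint : IntegrableOn (fun v => 1 - G v) (Set.Ioi 0))
    (hmean : (∫ v in Set.Ioi (0:ℝ), (1 - G v)) = α)
    (hNWUE : ∀ t ≥ (0:ℝ), α * Real.exp (-(t / α)) ≤ ∫ v in Set.Ioi t, (1 - G v))
    (p00 : ℝ → ℝ)
    (hp00 : ∀ t, p00 t = Real.exp (-(lam * ∫ v in (0:ℝ)..t, (1 - G v))))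
    (R : ℝ → ℝ)
    (hR : ∀ t, R t = p00 t + lam * ∫ u in (0:ℝ)..t, p00 u)
    (ρ : ℝ) (hρ : ρ = lam * α)
    (RM : ℝ → ℝ)
    (hRM : ∀ t, RM t = Real.exp (-(ρ * (1 - Real.exp (-(t / α))))) +
      lam * Real.exp (-ρ) * ∫ u in (0:ℝ)..t, Real.exp (ρ * Real.exp (-(u / α)))) :
    ∀ t, 0 ≤ t → RM t ≤ R t := by
  set f : ℝ → ℝ := fun v => 1 - G v with hf
  have hfmeas : Measurable f := (measurable_const.sub hmono.measurable)
  have hfbd : ∀ v, ‖f v‖ ≤ 1 := by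
    intro v
    rw [Real.norm_eq_abs, abs_le]
    constructor <;> simp [hf] <;> [exact (hG1 v).trans (by linarith); linarith [hG0 v]]
  have hII : ∀ a b : ℝ, IntervalIntegrable f volume a b := by
    intro a b
    constructor <;>
    · apply Measure.integrableOn_of_bounded (by simp) hfmeas.aestronglyMeasurable
      filter_upwards with x using hfbd x
  -- key inequality on cumulative integral
  have hkey : ∀ t ≥ (0:ℝ), (∫ v in (0:ℝ)..t, f v) ≤ α * (1 - Real.exp (-(t / α))) := by
    intro t ht
    have hsplit : (∫ v in Set.Ioc 0 t, f v) + (∫ v in Set.Ioi t, f v)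
        = ∫ v in Set.Ioi (0:ℝ), f v := by
      rw [← MeasureTheory.setIntegral_union]
      · rw [Set.Ioc_union_Ioi_eq_Ioi ht]
      · exact Set.Ioc_disjoint_Ioi le_rfl
      · exact measurableSet_Ioi
      · exact (hII 0 t).1
      · exact hint.mono_set (Set.Ioi_subset_Ioi ht)
    rw [intervalIntegral.integral_of_le ht]
    have := hNWUE t ht
    have hm : (∫ v in Set.Ioi (0:ℝ), f v) = α := hmean
    nlinarith [Real.exp_pos (-(t / α))]
  -- pointwise lower bound on p00
  set g : ℝ → ℝ := fun u => Real.exp (-(ρ * (1 - Real.exp (-(u / α))))) with hg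
  have hpg : ∀ u ≥ (0:ℝ), g u ≤ p00 u := by
    intro u hu
    rw [hp00 u, hg]
    apply Real.exp_le_exp.2
    have := hkey u hu
    rw [hρ]
    nlinarith
  intro t ht
  rw [hR t, hRM t]
  have hpt : g t ≤ p00 t := hpg t ht
  have hgeq : ∀ u : ℝ, Real.exp (-ρ) * Real.exp (ρ * Real.exp (-(u / α))) = g u := by
    intro u
    rw [hg, ← Real.exp_add]
    ring_nf
  have hcontg : Continuous g := by
    apply Real.continuous_exp.comp
    continuity
  have hcontp : Continuous p00 := by
    have hF : Continuous fun b => ∫ v in (0:ℝ)..b, f v :=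
      intervalIntegral.continuous_primitive hII 0
    have : Continuous fun b => Real.exp (-(lam * ∫ v in (0:ℝ)..b, f v)) :=
      Real.continuous_exp.comp ((continuous_const.mul hF).neg)
    exact this.congr fun x => (hp00 x).symm
  have hintle : (∫ u in (0:ℝ)..t, g u) ≤ ∫ u in (0:ℝ)..t, p00 u := by
    apply intervalIntegral.integral_mono_on ht
      (hcontg.intervalIntegrable 0 t) (hcontp.intervalIntegrable 0 t)
    intro u hu
    exact hpg u hu.1
  have hrw : lam * Real.exp (-ρ) * (∫ u in (0:ℝ)..t, Real.exp (ρ * Real.exp (-(u / α))))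
      = lam * ∫ u in (0:ℝ)..t, g u := by
    rw [mul_assoc, ← intervalIntegral.integral_const_mul]
    congr 1
    apply intervalIntegral.integral_congr
    intro u _
    exact hgeq u
  rw [hrw]
  have : lam * (∫ u in (0:ℝ)..t, g u) ≤ lam * ∫ u in (0:ℝ)..t, p00 u :=
    mul_le_mul_of_nonneg_left hintle hlam.le
  linarith
end

section
/- Assume ∫₀^∞ [e^{ρ - λ∫₀ᵘ(1-G(v))dv} - 1] du converges (where ρ = λ∫₀^∞(1-G(v))dv < ∞). Then lim_{t→∞}[R(t) - λ e^{-ρ} t] = e^{-ρ} + λ e^{-ρ} ∫₀^∞ [exp(λ∫ᵤ^∞(1-G(v))dv) - 1] du. -/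
open MeasureTheory Real Filter

theorem mginf_renewal_asymptotic
    (lam : ℝ) (hlam : 0 < lam)
    (G : ℝ → ℝ) (hmono : Monotone G) (hG0 : ∀ v, 0 ≤ G v) (hG1 : ∀ v, G v ≤ 1)
    (hint : IntegrableOn (fun v => 1 - G v) (Set.Ioi 0))
    (ρ : ℝ) (hρ : ρ = lam * ∫ v in Set.Ioi (0:ℝ), (1 - G v))
    (hconv : IntegrableOn
      (fun u => Real.exp (lam * ∫ v in Set.Ioi u, (1 - G v)) - 1) (Set.Ioi 0))
    (p00 : ℝ → ℝ)
    (hp00 : ∀ t, p00 t = Real.exp (-(lam * ∫ v in (0:ℝ)..t, (1 - G v))))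
    (R : ℝ → ℝ)
    (hR : ∀ t, R t = p00 t + lam * ∫ u in (0:ℝ)..t, p00 u) :
    Filter.Tendsto (fun t => R t - lam * Real.exp (-ρ) * t) Filter.atTop
      (nhds (Real.exp (-ρ) + lam * Real.exp (-ρ) *
        ∫ u in Set.Ioi (0:ℝ), (Real.exp (lam * ∫ v in Set.Ioi u, (1 - G v)) - 1))) := by
  have hsplit : ∀ u : ℝ, 0 ≤ u →
      (∫ v in Set.Ioi (0:ℝ), (1 - G v)) =
        (∫ v in Set.Ioc (0:ℝ) u, (1 - G v)) + ∫ v in Set.Ioi u, (1 - G v) := by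
    intro u hu
    rw [← MeasureTheory.setIntegral_union (Set.Ioc_disjoint_Ioi le_rfl) measurableSet_Ioi
      (hint.mono_set Set.Ioc_subset_Ioi_self) (hint.mono_set (Set.Ioi_subset_Ioi hu)),
      Set.Ioc_union_Ioi_eq_Ioi hu]
  have hp00' : ∀ u : ℝ, 0 ≤ u →
      p00 u = Real.exp (-ρ) * Real.exp (lam * ∫ v in Set.Ioi u, (1 - G v)) := by
    intro u hu
    rw [hp00, intervalIntegral.integral_of_le hu, ← Real.exp_add]
    congr 1
    rw [hρ]
    linear_combination lam * hsplit u hu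
  set f : ℝ → ℝ := fun u => Real.exp (lam * ∫ v in Set.Ioi u, (1 - G v)) - 1 with hf
  have key : ∀ t : ℝ, 0 ≤ t →
      R t - lam * Real.exp (-ρ) * t =
        p00 t + lam * Real.exp (-ρ) * ∫ u in (0:ℝ)..t, f u := by
    intro t ht
    have hfi : IntervalIntegrable f volume 0 t :=
      (intervalIntegrable_iff_integrableOn_Ioc_of_le ht).mpr
        (hconv.mono_set Set.Ioc_subset_Ioi_self)
    have hcongr : ∫ u in (0:ℝ)..t, p00 u =
        ∫ u in (0:ℝ)..t, (Real.exp (-ρ) * f u + Real.exp (-ρ)) := by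
      apply intervalIntegral.integral_congr
      intro u hu
      rw [Set.uIcc_of_le ht] at hu
      have := hp00' u hu.1
      simp only [hf]
      rw [this]; ring
    rw [hR, hcongr, intervalIntegral.integral_add (hfi.const_mul _)
      intervalIntegrable_const, intervalIntegral.integral_const_mul,
      intervalIntegral.integral_const]
    simp only [smul_eq_mul]
    ring
  have h1 : Tendsto p00 atTop (nhds (Real.exp (-ρ))) := by
    have hI := MeasureTheory.intervalIntegral_tendsto_integral_Ioi 0 hint tendsto_id
    have : Tendsto (fun t => Real.exp (-(lam * ∫ v in (0:ℝ)..t, (1 - G v)))) atTop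
        (nhds (Real.exp (-(lam * ∫ v in Set.Ioi (0:ℝ), (1 - G v))))) :=
      (Real.continuous_exp.tendsto _).comp (hI.const_mul lam).neg
    rw [← hρ] at this
    exact this.congr fun t => (hp00 t).symm
  have h2 : Tendsto (fun t => ∫ u in (0:ℝ)..t, f u) atTop
      (nhds (∫ u in Set.Ioi (0:ℝ), f u)) :=
    MeasureTheory.intervalIntegral_tendsto_integral_Ioi 0 hconv tendsto_id
  have hmain : Tendsto (fun t => p00 t + lam * Real.exp (-ρ) * ∫ u in (0:ℝ)..t, f u)
      atTop (nhds (Real.exp (-ρ) + lam * Real.exp (-ρ) * ∫ u in Set.Ioi (0:ℝ), f u)) :=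
    h1.add (h2.const_mul _)
  exact hmain.congr' (by filter_upwards [eventually_ge_atTop (0:ℝ)] with t ht
    using (key t ht).symm) |>.congr (fun _ => rfl)
end
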